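/- arXiv:1402.0746 — 8 statements merged into one kernel-verified Lean document; each statement's English description precedes it below -/
import Mathlib

section
/- Let R₁, R₂, S be binary relations on a set A and let t be an element that is terminating with respect to R₁ ∪ R₂ ∪ S (no infinite (R₁∪R₂∪S)-sequence starts at t). Then dh(t, rel(R₁∪R₂, S)) ≤ dh(t, rel(R₁, R₂∪S)) + dh(t, rel(R₂, R₁∪S)), where rel(R,S) denotes the relative rewrite relation S* · R · S*. -/
variable {A : Type*}

def iter (r : A → A → Prop) : ℕ → A → A → Prop
  | 0 => fun a b => a = b
  | n + 1 => fun a c => ∃ b, r a b ∧ iter r n b c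

noncomputable def dh (r : A → A → Prop) (t : A) : ℕ∞ :=
  ⨆ (m : ℕ) (_ : ∃ u, iter r m t u), (m : ℕ∞)

def relstep (r s : A → A → Prop) (a b : A) : Prop :=
  ∃ x y, Relation.ReflTransGen s a x ∧ r x y ∧ Relation.ReflTransGen s y b

theorem iter_prepend {r s : A → A → Prop} {a c : A} (k : ℕ)
    (h : Relation.ReflTransGen s a c) (hk : ∃ u, iter (relstep r s) k c u) :
    ∃ u, iter (relstep r s) k a u := by
  cases k with
  | zero => exact ⟨a, rfl⟩
  | succ k =>
    obtain ⟨u, d, hd, hrest⟩ := hk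
    obtain ⟨x, y, hx, hr, hy⟩ := hd
    exact ⟨u, d, ⟨x, y, h.trans hx, hr, hy⟩, hrest⟩

theorem decomp (R₁ R₂ S : A → A → Prop) :
    ∀ (m : ℕ) (a b : A), iter (relstep (fun a b => R₁ a b ∨ R₂ a b) S) m a b →
      ∃ k₁ k₂ : ℕ, k₁ + k₂ = m ∧
        (∃ u, iter (relstep R₁ (fun a b => R₂ a b ∨ S a b)) k₁ a u) ∧
        (∃ u, iter (relstep R₂ (fun a b => R₁ a b ∨ S a b)) k₂ a u) := by
  intro m
  induction m with
  | zero => intro a b _; exact ⟨0, 0, rfl, ⟨a, rfl⟩, ⟨a, rfl⟩⟩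
  | succ m ih =>
    intro a b h
    obtain ⟨c, hac, hcb⟩ := h
    obtain ⟨k₁, k₂, hk, h1, h2⟩ := ih c b hcb
    obtain ⟨x, y, hx, hr, hy⟩ := hac
    cases hr with
    | inl hr1 =>
      refine ⟨k₁ + 1, k₂, by omega, ?_, ?_⟩
      · obtain ⟨u, hu⟩ := h1
        exact ⟨u, c, ⟨x, y, Relation.ReflTransGen.mono (fun _ _ h => Or.inr h) _ _ hx, hr1,
          Relation.ReflTransGen.mono (fun _ _ h => Or.inr h) _ _ hy⟩, hu⟩
      · have hac' : Relation.ReflTransGen (fun a b => R₁ a b ∨ S a b) a c :=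
          ((Relation.ReflTransGen.mono (fun _ _ h => Or.inr h) _ _ hx).tail (Or.inl hr1)).trans
            (Relation.ReflTransGen.mono (fun _ _ h => Or.inr h) _ _ hy)
        exact iter_prepend k₂ hac' h2
    | inr hr2 =>
      refine ⟨k₁, k₂ + 1, by omega, ?_, ?_⟩
      · have hac' : Relation.ReflTransGen (fun a b => R₂ a b ∨ S a b) a c :=
          ((Relation.ReflTransGen.mono (fun _ _ h => Or.inr h) _ _ hx).tail (Or.inl hr2)).trans
            (Relation.ReflTransGen.mono (fun _ _ h => Or.inr h) _ _ hy)
        exact iter_prepend k₁ hac' h1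
      · obtain ⟨u, hu⟩ := h2
        exact ⟨u, c, ⟨x, y, Relation.ReflTransGen.mono (fun _ _ h => Or.inr h) _ _ hx, hr2,
          Relation.ReflTransGen.mono (fun _ _ h => Or.inr h) _ _ hy⟩, hu⟩

theorem stmt1 (R₁ R₂ S : A → A → Prop) (t : A)
    (ht : Acc (fun a b => R₁ b a ∨ R₂ b a ∨ S b a) t) :
    dh (relstep (fun a b => R₁ a b ∨ R₂ a b) S) t ≤
      dh (relstep R₁ (fun a b => R₂ a b ∨ S a b)) t +
      dh (relstep R₂ (fun a b => R₁ a b ∨ S a b)) t := by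
  refine iSup₂_le fun m hm => ?_
  obtain ⟨u, hu⟩ := hm
  obtain ⟨k₁, k₂, hk, h1, h2⟩ := decomp R₁ R₂ S m t u hu
  have e : (m : ℕ∞) = (k₁ : ℕ∞) + (k₂ : ℕ∞) := by rw [← hk]; push_cast; ring
  rw [e]
  exact add_le_add
    (le_iSup₂ (f := fun (m : ℕ) (_ : ∃ u, iter (relstep R₁ (fun a b => R₂ a b ∨ S a b)) m t u) => (m : ℕ∞)) k₁ h1)
    (le_iSup₂ (f := fun (m : ℕ) (_ : ∃ u, iter (relstep R₂ (fun a b => R₁ a b ∨ S a b)) m t u) => (m : ℕ∞)) k₂ h2)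
end

section
/- Let R₁, R₂, S be binary relations on a set A and let L be a set of elements, each terminating with respect to R₁∪R₂∪S. Define cp(n,→,L) = sup { dh(t,→) | t ∈ L, |t| ≤ n } for a size function |·| on A. Then cp(n, rel(R₁∪R₂,S), L) = Θ(cp(n, rel(R₁,R₂∪S), L) + cp(n, rel(R₂,R₁∪S), L)); concretely, cp(n, rel(R₁∪R₂,S), L) ≤ cp(n, rel(R₁,R₂∪S), L) + cp(n, rel(R₂,R₁∪S), L) and 2 · cp(n, rel(R₁∪R₂,S), L) ≥ cp(n, rel(R₁,R₂∪S), L) + cp(n, rel(R₂,R₁∪S), L). -/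
variable {A : Type*}

noncomputable def cp (r : A → A → Prop) (L : Set A) (size : A → ℕ) (n : ℕ) : ℕ∞ :=
  ⨆ (t : A) (_ : t ∈ L ∧ size t ≤ n), dh r t

namespace Stmt3Aux

lemma relstep_prepend {r s : A → A → Prop} {a b c : A}
    (h : Relation.ReflTransGen s a b) (h2 : relstep r s b c) : relstep r s a c := by
  obtain ⟨x, y, h1, hr, h3⟩ := h2
  exact ⟨x, y, h.trans h1, hr, h3⟩

lemma iter_prepend {r s : A → A → Prop} {k : ℕ} {a b : A}
    (h : Relation.ReflTransGen s a b)
    (h2 : ∃ u, iter (relstep r s) k b u) : ∃ u, iter (relstep r s) k a u := by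
  obtain ⟨u, hu⟩ := h2
  cases k with
  | zero => exact ⟨a, rfl⟩
  | succ k =>
    obtain ⟨c, hc, hrest⟩ := hu
    exact ⟨u, c, relstep_prepend h hc, hrest⟩

/-- Prepending a path of steps each of which is either a main step (`r`) or
an auxiliary step (`s`) gives at least as many `relstep r s` steps. -/
lemma iter_prepend_ge {r s q : A → A → Prop} (hq : ∀ x y, q x y → r x y ∨ s x y)
    {a b : A} (h : Relation.ReflTransGen q a b)
    {k : ℕ} (h2 : ∃ u, iter (relstep r s) k b u) :
    ∃ k', k ≤ k' ∧ ∃ u, iter (relstep r s) k' a u := by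
  induction h using Relation.ReflTransGen.head_induction_on with
  | refl => exact ⟨k, le_rfl, h2⟩
  | head hstep _ ih =>
    obtain ⟨k', hk', u, hu⟩ := ih
    rcases hq _ _ hstep with hr | hs
    · exact ⟨k' + 1, by omega, u, _, ⟨_, _, .refl, hr, .refl⟩, hu⟩
    · exact ⟨k', hk', iter_prepend (Relation.ReflTransGen.single hs) ⟨u, hu⟩⟩

variable {R₁ R₂ S : A → A → Prop}

lemma lemB {m : ℕ} {t u : A}
    (h : iter (relstep R₁ (fun a b => R₂ a b ∨ S a b)) m t u) :
    ∃ k, m ≤ k ∧ ∃ v, iter (relstep (fun a b => R₁ a b ∨ R₂ a b) S) k t v := by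
  have hq : ∀ x y : A, (R₂ x y ∨ S x y) → (R₁ x y ∨ R₂ x y) ∨ S x y := by
    intro x y h; exact h.elim (fun h => .inl (.inr h)) .inr
  induction m generalizing t with
  | zero => exact ⟨0, le_rfl, t, rfl⟩
  | succ m ih =>
    obtain ⟨b, hb, hrest⟩ := h
    obtain ⟨k, hk, hv⟩ := ih hrest
    obtain ⟨x, y, h1, hr, h2⟩ := hb
    obtain ⟨k', hk', v', hv'⟩ := iter_prepend_ge hq h2 hv
    have hx : ∃ v, iter (relstep (fun a b => R₁ a b ∨ R₂ a b) S) (k' + 1) x v :=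
      ⟨v', y, ⟨x, y, .refl, Or.inl hr, .refl⟩, hv'⟩
    obtain ⟨k'', hk'', hv''⟩ := iter_prepend_ge hq h1 hx
    exact ⟨k'', by omega, hv''⟩

lemma lemB' {m : ℕ} {t u : A}
    (h : iter (relstep R₂ (fun a b => R₁ a b ∨ S a b)) m t u) :
    ∃ k, m ≤ k ∧ ∃ v, iter (relstep (fun a b => R₁ a b ∨ R₂ a b) S) k t v := by
  have hq : ∀ x y : A, (R₁ x y ∨ S x y) → (R₁ x y ∨ R₂ x y) ∨ S x y := by
    intro x y h; exact h.elim (fun h => .inl (.inl h)) .inr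
  induction m generalizing t with
  | zero => exact ⟨0, le_rfl, t, rfl⟩
  | succ m ih =>
    obtain ⟨b, hb, hrest⟩ := h
    obtain ⟨k, hk, hv⟩ := ih hrest
    obtain ⟨x, y, h1, hr, h2⟩ := hb
    obtain ⟨k', hk', v', hv'⟩ := iter_prepend_ge hq h2 hv
    have hx : ∃ v, iter (relstep (fun a b => R₁ a b ∨ R₂ a b) S) (k' + 1) x v :=
      ⟨v', y, ⟨x, y, .refl, Or.inr hr, .refl⟩, hv'⟩
    obtain ⟨k'', hk'', hv''⟩ := iter_prepend_ge hq h1 hx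
    exact ⟨k'', by omega, hv''⟩

lemma lemA {m : ℕ} {t u : A}
    (h : iter (relstep (fun a b => R₁ a b ∨ R₂ a b) S) m t u) :
    ∃ k₁ k₂, m ≤ k₁ + k₂ ∧
      (∃ v, iter (relstep R₁ (fun a b => R₂ a b ∨ S a b)) k₁ t v) ∧
      (∃ w, iter (relstep R₂ (fun a b => R₁ a b ∨ S a b)) k₂ t w) := by
  induction m generalizing t with
  | zero => exact ⟨0, 0, by omega, ⟨t, rfl⟩, ⟨t, rfl⟩⟩
  | succ m ih =>
    obtain ⟨b, hb, hrest⟩ := h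
    obtain ⟨k₁, k₂, hk, h1, h2⟩ := ih hrest
    obtain ⟨x, y, hs1, hr, hs2⟩ := hb
    rcases hr with hr1 | hr2
    · have step1 : relstep R₁ (fun a b => R₂ a b ∨ S a b) t b :=
        ⟨x, y, Relation.ReflTransGen.mono (fun _ _ h => Or.inr h) _ _ hs1, hr1, Relation.ReflTransGen.mono (fun _ _ h => Or.inr h) _ _ hs2⟩
      have htb : Relation.ReflTransGen (fun a b => R₁ a b ∨ S a b) t b :=
        ((Relation.ReflTransGen.mono (fun _ _ h => Or.inr h) _ _ hs1).trans
          (Relation.ReflTransGen.single (Or.inl hr1))).trans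
          (Relation.ReflTransGen.mono (fun _ _ h => Or.inr h) _ _ hs2)
      obtain ⟨v, hv⟩ := h1
      exact ⟨k₁ + 1, k₂, by omega, ⟨v, b, step1, hv⟩, iter_prepend htb h2⟩
    · have step2 : relstep R₂ (fun a b => R₁ a b ∨ S a b) t b :=
        ⟨x, y, Relation.ReflTransGen.mono (fun _ _ h => Or.inr h) _ _ hs1, hr2, Relation.ReflTransGen.mono (fun _ _ h => Or.inr h) _ _ hs2⟩
      have htb : Relation.ReflTransGen (fun a b => R₂ a b ∨ S a b) t b :=
        ((Relation.ReflTransGen.mono (fun _ _ h => Or.inr h) _ _ hs1).trans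
          (Relation.ReflTransGen.single (Or.inl hr2))).trans
          (Relation.ReflTransGen.mono (fun _ _ h => Or.inr h) _ _ hs2)
      obtain ⟨w, hw⟩ := h2
      exact ⟨k₁, k₂ + 1, by omega, iter_prepend htb h1, ⟨w, b, step2, hw⟩⟩

lemma le_dh {r : A → A → Prop} {m : ℕ} {t : A} (h : ∃ u, iter r m t u) :
    (m : ℕ∞) ≤ dh r t :=
  le_iSup₂ (f := fun m (_ : ∃ u, iter r m t u) => (m : ℕ∞)) m h

lemma dh_le_of_steps {r r' : A → A → Prop} {t : A}
    (H : ∀ m, (∃ u, iter r m t u) → ∃ k, m ≤ k ∧ ∃ v, iter r' k t v) :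
    dh r t ≤ dh r' t := by
  refine iSup₂_le fun m hm => ?_
  obtain ⟨k, hk, hv⟩ := H m hm
  exact le_trans (by exact_mod_cast hk) (le_dh hv)

end Stmt3Aux

open Stmt3Aux in
theorem stmt3 (R₁ R₂ S : A → A → Prop) (L : Set A) (size : A → ℕ)
    (hL : ∀ t ∈ L, Acc (fun a b => R₁ b a ∨ R₂ b a ∨ S b a) t) (n : ℕ) :
    cp (relstep (fun a b => R₁ a b ∨ R₂ a b) S) L size n ≤
        cp (relstep R₁ (fun a b => R₂ a b ∨ S a b)) L size n +
        cp (relstep R₂ (fun a b => R₁ a b ∨ S a b)) L size n ∧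
    cp (relstep R₁ (fun a b => R₂ a b ∨ S a b)) L size n +
        cp (relstep R₂ (fun a b => R₁ a b ∨ S a b)) L size n ≤
      2 * cp (relstep (fun a b => R₁ a b ∨ R₂ a b) S) L size n := by
  set r := relstep (fun a b => R₁ a b ∨ R₂ a b) S with hr
  set r₁ := relstep R₁ (fun a b => R₂ a b ∨ S a b) with hr1
  set r₂ := relstep R₂ (fun a b => R₁ a b ∨ S a b) with hr2
  constructor
  · refine iSup₂_le fun t ht => ?_
    have hdh : dh r t ≤ dh r₁ t + dh r₂ t := by
      refine iSup₂_le fun m hm => ?_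
      obtain ⟨u, hu⟩ := hm
      obtain ⟨k₁, k₂, hk, h1, h2⟩ := lemA hu
      calc (m : ℕ∞) ≤ (k₁ : ℕ∞) + (k₂ : ℕ∞) := by exact_mod_cast hk
        _ ≤ dh r₁ t + dh r₂ t := add_le_add (le_dh h1) (le_dh h2)
    refine hdh.trans (add_le_add ?_ ?_)
    · exact le_iSup₂ (f := fun t (_ : t ∈ L ∧ size t ≤ n) => dh r₁ t) t ht
    · exact le_iSup₂ (f := fun t (_ : t ∈ L ∧ size t ≤ n) => dh r₂ t) t ht
  · have c1 : cp r₁ L size n ≤ cp r L size n := by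
      refine iSup₂_le fun t ht => ?_
      refine (dh_le_of_steps fun m hm => ?_).trans
        (le_iSup₂ (f := fun t (_ : t ∈ L ∧ size t ≤ n) => dh r t) t ht)
      obtain ⟨u, hu⟩ := hm
      exact lemB hu
    have c2 : cp r₂ L size n ≤ cp r L size n := by
      refine iSup₂_le fun t ht => ?_
      refine (dh_le_of_steps fun m hm => ?_).trans
        (le_iSup₂ (f := fun t (_ : t ∈ L ∧ size t ≤ n) => dh r t) t ht)
      obtain ⟨u, hu⟩ := hm
      exact lemB' hu
    calc cp r₁ L size n + cp r₂ L size n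
        ≤ cp r L size n + cp r L size n := add_le_add c1 c2
      _ = 2 * cp r L size n := (two_mul _).symm
end

section
/- Let R₁, R₂, S be binary relations on a set A, let (≻,≽) be compatible relations with R₂ ⊆ ≻, S ⊆ ≽, and suppose there exists a constant Δ ∈ ℕ such that for all u,v with u R₁ v one has dh(u,≻) + Δ ≥ dh(v,≻). Then for every element s that is terminating with respect to R₁∪R₂∪S, dh(s, rel(R₁∪R₂, S)) ≤ (Δ+1) · dh(s, rel(R₁, R₂∪S)) + dh(s, ≻). -/
variable {A : Type*}

lemma dh_mono {r r' : A → A → Prop} {a b : A}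
    (h : ∀ m u, iter r m b u → ∃ v, iter r' m a v) : dh r b ≤ dh r' a := by
  refine iSup₂_le fun m hm => ?_
  obtain ⟨u, hu⟩ := hm
  exact le_iSup₂_of_le m (h m u hu) le_rfl

lemma le_dh {r : A → A → Prop} {a u : A} {m : ℕ} (h : iter r m a u) :
    (m : ℕ∞) ≤ dh r a :=
  le_iSup₂_of_le m ⟨u, h⟩ le_rfl

lemma dh_add_one_le {r : A → A → Prop} {a b : A} (h : r a b) :
    dh r b + 1 ≤ dh r a := by
  rw [dh, ENat.biSup_add' ⟨0, b, rfl⟩]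
  refine iSup₂_le fun m hm => ?_
  obtain ⟨u, hu⟩ := hm
  have : ((m + 1 : ℕ) : ℕ∞) ≤ dh r a := le_dh ⟨b, h, hu⟩
  simpa using this

/-- dh succ is weakly decreasing along a wsucc step (using compatibility). -/
lemma dh_wsucc_step {succ wsucc : A → A → Prop}
    (hws : ∀ a b c, wsucc a b → succ b c → succ a c) {a b : A}
    (h : wsucc a b) : dh succ b ≤ dh succ a := by
  refine dh_mono fun m u hu => ?_
  cases m with
  | zero => exact ⟨a, rfl⟩
  | succ m =>
    obtain ⟨c, hbc, hrest⟩ := hu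
    exact ⟨u, c, hws a b c h hbc, hrest⟩

lemma dh_wsucc_rtg {succ wsucc : A → A → Prop}
    (hws : ∀ a b c, wsucc a b → succ b c → succ a c) {a b : A}
    (h : Relation.ReflTransGen wsucc a b) : dh succ b ≤ dh succ a := by
  induction h with
  | refl => exact le_rfl
  | tail _ hstep ih => exact (dh_wsucc_step hws hstep).trans ih

/-- prefixing by reflexive-transitive steps of the relaxed relation
preserves relstep-chains. -/
lemma dh_relstep_shift {r e : A → A → Prop} {a b : A}
    (hab : Relation.ReflTransGen e a b) :
    dh (relstep r e) b ≤ dh (relstep r e) a := by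
  refine dh_mono fun m u hu => ?_
  cases m with
  | zero => exact ⟨a, rfl⟩
  | succ m =>
    obtain ⟨c, ⟨x, y, hbx, hxy, hyc⟩, hrest⟩ := hu
    exact ⟨u, c, ⟨x, y, hab.trans hbx, hxy, hyc⟩, hrest⟩

theorem stmt4 (R₁ R₂ S succ wsucc : A → A → Prop) (Δ : ℕ)
    (hfb : ∀ a : A, {b | succ a b}.Finite)
    (hws : ∀ a b c, wsucc a b → succ b c → succ a c)
    (hsw : ∀ a b c, succ a b → wsucc b c → succ a c)
    (hR₂ : ∀ a b, R₂ a b → succ a b)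
    (hS : ∀ a b, S a b → wsucc a b)
    (hgap : ∀ u v, R₁ u v → dh succ v ≤ dh succ u + (Δ : ℕ∞))
    (s : A) (hs : Acc (fun a b => R₁ b a ∨ R₂ b a ∨ S b a) s) :
    dh (relstep (fun a b => R₁ a b ∨ R₂ a b) S) s ≤
      ((Δ : ℕ∞) + 1) * dh (relstep R₁ (fun a b => R₂ a b ∨ S a b)) s + dh succ s := by
  set E : A → A → Prop := fun a b => R₂ a b ∨ S a b with hE
  have key : ∀ n (a u : A), iter (relstep (fun a b => R₁ a b ∨ R₂ a b) S) n a u →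
      (n : ℕ∞) ≤ ((Δ : ℕ∞) + 1) * dh (relstep R₁ E) a + dh succ a := by
    intro n
    induction n with
    | zero => simp
    | succ n ih =>
      rintro a u ⟨b, ⟨x, y, hax, hxy, hyb⟩, hrest⟩
      have hdb := ih b u hrest
      -- S*-parts as wsucc chains
      have haxw : Relation.ReflTransGen wsucc a x := Relation.ReflTransGen.mono hS a x hax
      have hybw : Relation.ReflTransGen wsucc y b := Relation.ReflTransGen.mono hS y b hyb
      -- S*-parts as E chains
      have haxE : Relation.ReflTransGen E a x := Relation.ReflTransGen.mono (fun _ _ h => Or.inr h) a x hax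
      have hybE : Relation.ReflTransGen E y b := Relation.ReflTransGen.mono (fun _ _ h => Or.inr h) y b hyb
      have hxa : dh succ x ≤ dh succ a := dh_wsucc_rtg hws haxw
      have hby : dh succ b ≤ dh succ y := dh_wsucc_rtg hws hybw
      push_cast
      cases hxy with
      | inl h1 =>
        -- an R₁ step: this is a relstep R₁ E step from a to b
        have hPab : relstep R₁ E a b := ⟨x, y, haxE, h1, hybE⟩
        have h1' : dh (relstep R₁ E) b + 1 ≤ dh (relstep R₁ E) a :=
          dh_add_one_le hPab
        have h2' : dh succ b ≤ dh succ a + (Δ : ℕ∞) :=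
          hby.trans ((hgap x y h1).trans (add_le_add_left hxa _))
        calc (n : ℕ∞) + 1
            ≤ (((Δ : ℕ∞) + 1) * dh (relstep R₁ E) b + dh succ b) + 1 :=
              add_le_add_left hdb 1
          _ ≤ (((Δ : ℕ∞) + 1) * dh (relstep R₁ E) b + (dh succ a + (Δ : ℕ∞))) + 1 :=
              add_le_add_left (add_le_add_right h2' _) 1
          _ = ((Δ : ℕ∞) + 1) * (dh (relstep R₁ E) b + 1) + dh succ a := by ring
          _ ≤ ((Δ : ℕ∞) + 1) * dh (relstep R₁ E) a + dh succ a :=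
              add_le_add_left (mul_le_mul_right h1' _) _
      | inr h2 =>
        -- an R₂ step: absorbed in E, and a strict succ decrease
        have hEab : Relation.ReflTransGen E a b :=
          (haxE.tail (Or.inl h2)).trans hybE
        have h1' : dh (relstep R₁ E) b ≤ dh (relstep R₁ E) a :=
          dh_relstep_shift hEab
        have h2' : dh succ b + 1 ≤ dh succ a := by
          calc dh succ b + 1 ≤ dh succ y + 1 := add_le_add_left hby 1
            _ ≤ dh succ x := dh_add_one_le (hR₂ x y h2)
            _ ≤ dh succ a := hxa
        calc (n : ℕ∞) + 1
            ≤ (((Δ : ℕ∞) + 1) * dh (relstep R₁ E) b + dh succ b) + 1 :=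
              add_le_add_left hdb 1
          _ = ((Δ : ℕ∞) + 1) * dh (relstep R₁ E) b + (dh succ b + 1) := by ring
          _ ≤ ((Δ : ℕ∞) + 1) * dh (relstep R₁ E) a + dh succ a :=
              add_le_add (mul_le_mul_right h1' _) h2'
  refine iSup₂_le fun m hm => ?_
  obtain ⟨u, hu⟩ := hm
  exact key m s u hu
end

section
/- Let M, N be finite multisets over ℕ and define M ≻ N (the multiset ordering) to hold if there exist multisets X, Y with N = (M \ X) ∪ Y, X nonempty, and for every m ∈ Y there is n ∈ X with n < m. For c ∈ ℕ, define M ≻ᶜ N iff drop(M,c) ≻ drop(N,c), where drop(M,c) removes all occurrences of c from M. Then ≻ᶜ is well-founded on finite multisets over {0,…,c}. -/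
open Multiset

/-- Dershowitz–Manna multiset extension of `<` on ℕ. -/
def dm (M N : Multiset ℕ) : Prop :=
  ∃ X Y : Multiset ℕ, X ≤ M ∧ X ≠ 0 ∧ N = (M - X) + Y ∧ ∀ m ∈ Y, ∃ n ∈ X, n < m

/-- Remove all occurrences of `c` from `M`. -/
def dropM (M : Multiset ℕ) (c : ℕ) : Multiset ℕ := M.filter (· ≠ c)

/-- `M ≻ᶜ N` iff `drop(M,c) ≻ drop(N,c)`. -/
def dmc (c : ℕ) (M N : Multiset ℕ) : Prop := dm (dropM M c) (dropM N c)

open Relation in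
lemma dm_aux (X : Multiset ℕ) : ∀ (Z Y : Multiset ℕ), X ≠ 0 →
    (∀ y ∈ Y, ∃ x ∈ X, y < x) →
    TransGen (CutExpand (· < · : ℕ → ℕ → Prop)) (Z + Y) (Z + X) := by
  classical
  induction X using Multiset.induction with
  | empty => intro Z Y h _; exact absurd rfl h
  | cons a X' ih =>
    intro Z Y _ hY
    set Y₁ := Y.filter (fun y => ∃ x ∈ X', y < x) with hY₁
    set Y₂ := Y.filter (fun y => ¬ ∃ x ∈ X', y < x) with hY₂
    have hsplit : Y₁ + Y₂ = Y := Multiset.filter_add_not _ Y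
    have hY₂a : ∀ y ∈ Y₂, y < a := by
      intro y hy
      have hy' := (Multiset.mem_filter.1 hy).2
      obtain ⟨x, hx, hlt⟩ := hY y (Multiset.mem_filter.1 hy).1
      rcases Multiset.mem_cons.1 hx with rfl | hx
      · exact hlt
      · exact absurd ⟨x, hx, hlt⟩ hy'
    have stepA : CutExpand (· < · : ℕ → ℕ → Prop) (Z + X' + Y₂) (Z + X' + {a}) :=
      ⟨Y₂, a, hY₂a, by simp [add_comm, add_left_comm, add_assoc]⟩
    have stepB : ReflTransGen (CutExpand (· < · : ℕ → ℕ → Prop))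
        (Z + Y₂ + Y₁) (Z + Y₂ + X') := by
      by_cases hX' : X' = 0
      · have : Y₁ = 0 := by
          subst hX'
          rw [hY₁]
          exact Multiset.filter_eq_nil.2 (by simp)
        rw [this, hX']
      · exact (ih (Z + Y₂) Y₁ hX' (fun y hy => (Multiset.mem_filter.1 hy).2)).to_reflTransGen
    have : TransGen (CutExpand (· < · : ℕ → ℕ → Prop)) (Z + Y₂ + Y₁) (Z + X' + {a}) := by
      refine TransGen.tail' (stepB.trans ?_) stepA
      rw [show Z + Y₂ + X' = Z + X' + Y₂ by simp [add_comm, add_left_comm, add_assoc]]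
    have e1 : Z + Y₂ + Y₁ = Z + Y := by rw [← hsplit]; simp [add_comm, add_left_comm, add_assoc]
    have e2 : Z + X' + {a} = Z + (a ::ₘ X') := by
      rw [← Multiset.singleton_add]; simp [add_comm, add_left_comm, add_assoc]
    rwa [e1, e2] at this

theorem stmt6 (c : ℕ) :
    WellFounded (fun N M : {M : Multiset ℕ // ∀ x ∈ M, x ≤ c} => dmc c M.1 N.1) := by
  classical
  have wf : WellFounded (Relation.TransGen (Relation.CutExpand (· < · : ℕ → ℕ → Prop))) :=
    (Nat.lt_wfRel.wf.cutExpand).transGen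
  have := Subrelation.wf (q := fun N M : {M : Multiset ℕ // ∀ x ∈ M, x ≤ c} => dmc c M.1 N.1)
    (r := InvImage (Relation.TransGen (Relation.CutExpand (· < · : ℕ → ℕ → Prop)))
      (fun M => (dropM M.1 c).map (c - ·)))
    ?_ (InvImage.wf _ wf)
  · exact this
  · intro N M h
    obtain ⟨X, Y, hXM, hX0, hN, hY⟩ := h
    have hltM : ∀ x ∈ dropM M.1 c, x < c := by
      intro x hx
      have h1 := M.2 x (Multiset.mem_of_mem_filter hx)
      have h2 : x ≠ c := by simpa using Multiset.of_mem_filter hx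
      omega
    have hltN : ∀ x ∈ dropM N.1 c, x < c := by
      intro x hx
      have h1 := N.2 x (Multiset.mem_of_mem_filter hx)
      have h2 : x ≠ c := by simpa using Multiset.of_mem_filter hx
      omega
    have hMeq : dropM M.1 c = (dropM M.1 c - X) + X := (tsub_add_cancel_of_le hXM).symm
    have key := dm_aux (X.map (c - ·)) ((dropM M.1 c - X).map (c - ·)) (Y.map (c - ·))
      (by simpa using hX0)
      (by
        intro y hy
        obtain ⟨m, hm, rfl⟩ := Multiset.mem_map.1 hy
        obtain ⟨n, hn, hlt⟩ := hY m hm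
        refine ⟨c - n, Multiset.mem_map_of_mem _ hn, ?_⟩
        have hm' : m < c := hltN m (by rw [hN]; exact Multiset.mem_add.2 (Or.inr hm))
        omega)
    show Relation.TransGen _ ((dropM N.1 c).map (c - ·)) ((dropM M.1 c).map (c - ·))
    rw [hN, Multiset.map_add]
    conv_rhs => rw [hMeq, Multiset.map_add]
    exact key
end

section
/- Let M, N be finite multisets over ℕ with M ≻ N in the multiset extension of <, witnessed by multisets X, Y (N = (M\X) ∪ Y, X ≠ ∅, ∀m∈Y ∃n∈X, n < m). If additionally there exists d ∈ X with d < c and d < m for all m ∈ Y, then drop(M,c) ≻ drop(N,c), i.e., M ≻ᶜ N. -/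
open Multiset

theorem stmt7 (c : ℕ) (M N X Y : Multiset ℕ)
    (hXM : X ≤ M) (hX : X ≠ 0) (hN : N = (M - X) + Y)
    (hY : ∀ m ∈ Y, ∃ n ∈ X, n < m)
    (d : ℕ) (hd : d ∈ X) (hdc : d < c) (hdY : ∀ m ∈ Y, d < m) :
    dm (dropM M c) (dropM N c) := by
  refine ⟨X.filter (· ≠ c), Y.filter (· ≠ c), ?_, ?_, ?_, ?_⟩
  · exact Multiset.filter_le_filter _ hXM
  · intro h
    have hd' : d ∈ X.filter (· ≠ c) := Multiset.mem_filter.2 ⟨hd, Nat.ne_of_lt hdc⟩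
    simp [h] at hd'
  · simp only [dropM, hN, Multiset.filter_add, Multiset.filter_sub]
  · intro m hm
    exact ⟨d, Multiset.mem_filter.2 ⟨hd, Nat.ne_of_lt hdc⟩,
      hdY m (Multiset.mem_filter.1 hm).1⟩
end

section
/- Let d ∈ ℕ, d ≥ 1, and let A be a d×d upper triangular matrix over ℕ, i.e., A(i,i) ≤ 1 for all i and A(i,j) = 0 for i > j. Then for every n ≥ 1, all entries of Aⁿ are bounded by a polynomial in n of degree d−1; concretely (Aⁿ)(i,j) ≤ C · n^(d-1) for a constant C depending only on A and d. -/
theorem stmt12 (d : ℕ) (hd : 1 ≤ d) (A : Matrix (Fin d) (Fin d) ℕ)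
    (hdiag : ∀ i, A i i ≤ 1)
    (hlow : ∀ i j : Fin d, j < i → A i j = 0) :
    ∃ C : ℕ, ∀ n : ℕ, 1 ≤ n → ∀ i j, (A ^ n) i j ≤ C * n ^ (d - 1) := by
  obtain ⟨B, hB⟩ : ∃ B, ∀ i j, A i j ≤ B :=
    ⟨Finset.univ.sup fun p : Fin d × Fin d => A p.1 p.2,
      fun i j => Finset.le_sup (f := fun p : Fin d × Fin d => A p.1 p.2) (Finset.mem_univ (i, j))⟩
  have hlowpow : ∀ n, ∀ i j : Fin d, j < i → (A ^ n) i j = 0 := by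
    intro n
    induction n with
    | zero =>
      intro i j h
      simp [Matrix.one_apply, (Fin.ne_of_lt h).symm, Fin.ne_of_lt, ne_of_gt h]
    | succ n ih =>
      intro i j h
      rw [pow_succ', Matrix.mul_apply]
      apply Finset.sum_eq_zero
      intro m _
      rcases lt_or_ge m i with hm | hm
      · rw [hlow i m hm, zero_mul]
      · rw [ih m j (lt_of_lt_of_le h hm), mul_zero]
  have hdiagpow : ∀ n, ∀ i : Fin d, (A ^ n) i i ≤ 1 := by
    intro n i
    induction n with
    | zero => simp [Matrix.one_apply]
    | succ n ih =>
      rw [pow_succ', Matrix.mul_apply]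
      rw [Finset.sum_eq_single i]
      · calc A i i * (A ^ n) i i ≤ 1 * 1 := Nat.mul_le_mul (hdiag i) ih
          _ = 1 := by ring
      · intro m _ hm
        rcases lt_or_ge m i with h | h
        · rw [hlow i m h, zero_mul]
        · rw [hlowpow n m i (lt_of_le_of_ne h (Ne.symm hm)), mul_zero]
      · intro h; exact absurd (Finset.mem_univ i) h
  have hkey : ∀ k, ∃ C, ∀ n, 1 ≤ n → ∀ i j : Fin d, j.val ≤ i.val + k →
      (A ^ n) i j ≤ C * n ^ k := by
    intro k
    induction k with
    | zero =>
      refine ⟨1, fun n hn i j hij => ?_⟩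
      rcases lt_or_ge j i with h | h
      · simp [hlowpow n i j h]
      · have hij' : i = j := by
          apply le_antisymm h
          rw [Fin.le_def]; omega
        subst hij'
        simpa using hdiagpow n i
    | succ k ih =>
      obtain ⟨C, hC⟩ := ih
      refine ⟨B + d * B * C, ?_⟩
      intro n hn
      induction n, hn using Nat.le_induction with
      | base =>
        intro i j hij
        rw [pow_one]
        calc A i j ≤ B := hB i j
          _ ≤ (B + d * B * C) * 1 ^ (k + 1) := by simp
      | succ n hn ihn =>
        intro i j hij
        rw [pow_succ', Matrix.mul_apply, ← Finset.add_sum_erase Finset.univ _ (Finset.mem_univ i)]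
        have h1 : A i i * (A ^ n) i j ≤ (B + d * B * C) * n ^ (k + 1) := by
          calc A i i * (A ^ n) i j ≤ 1 * ((B + d * B * C) * n ^ (k + 1)) :=
                Nat.mul_le_mul (hdiag i) (ihn i j hij)
            _ = (B + d * B * C) * n ^ (k + 1) := one_mul _
        have h2 : ∑ m ∈ Finset.univ.erase i, A i m * (A ^ n) m j ≤ d * (B * (C * n ^ k)) := by
          calc ∑ m ∈ Finset.univ.erase i, A i m * (A ^ n) m j
              ≤ (Finset.univ.erase i).card • (B * (C * n ^ k)) := by
                apply Finset.sum_le_card_nsmul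
                intro m hm
                have hmne : m ≠ i := Finset.ne_of_mem_erase hm
                rcases lt_or_ge m i with h | h
                · rw [hlow i m h, zero_mul]; exact Nat.zero_le _
                · have hmi : i < m := lt_of_le_of_ne h (Ne.symm hmne)
                  have : (j : ℕ) ≤ m.val + k := by
                    have := hmi
                    rw [Fin.lt_def] at this
                    omega
                  exact Nat.mul_le_mul (hB i m) (hC n hn m j this)
            _ ≤ d * (B * (C * n ^ k)) := by
                rw [smul_eq_mul]
                apply Nat.mul_le_mul_right
                calc (Finset.univ.erase i).card ≤ Finset.univ.card :=
                      Finset.card_le_card (Finset.erase_subset _ _)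
                  _ = d := by simp
        calc A i i * (A ^ n) i j + ∑ m ∈ Finset.univ.erase i, A i m * (A ^ n) m j
            ≤ (B + d * B * C) * n ^ (k + 1) + d * (B * (C * n ^ k)) := Nat.add_le_add h1 h2
          _ ≤ (B + d * B * C) * n ^ (k + 1) + (B + d * B * C) * n ^ k := by
              apply Nat.add_le_add_left
              have h3 : d * (B * (C * n ^ k)) = (d * B * C) * n ^ k := by ring
              rw [h3]
              exact Nat.mul_le_mul_right _ (by omega)
          _ = (B + d * B * C) * (n ^ k * (n + 1)) := by ring
          _ ≤ (B + d * B * C) * (n + 1) ^ (k + 1) := by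
              apply Nat.mul_le_mul_left
              calc n ^ k * (n + 1) ≤ (n + 1) ^ k * (n + 1) :=
                    Nat.mul_le_mul_right _ (Nat.pow_le_pow_left (Nat.le_succ n) k)
                _ = (n + 1) ^ (k + 1) := by ring
  obtain ⟨C, hC⟩ := hkey (d - 1)
  refine ⟨C, fun n hn i j => ?_⟩
  apply hC n hn
  have := j.isLt
  omega
end

section
/- Let M₁, …, M_k be d×d upper triangular matrices over ℕ (diagonal entries ≤ 1, zero below the diagonal). Then every product of n matrices drawn from {M₁,…,M_k} has all entries bounded by C · n^(d-1) for a constant C depending only on the matrices and d. -/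
theorem stmt13 (d k : ℕ) (hd : 1 ≤ d) (M : Fin k → Matrix (Fin d) (Fin d) ℕ)
    (hdiag : ∀ t i, M t i i ≤ 1)
    (hlow : ∀ t (i j : Fin d), j < i → M t i j = 0) :
    ∃ C : ℕ, ∀ n : ℕ, 1 ≤ n → ∀ l : List (Fin k), l.length = n →
      ∀ i j, (l.map M).prod i j ≤ C * n ^ (d - 1) := by
  classical
  obtain ⟨B, hB1, hB⟩ : ∃ B, 1 ≤ B ∧ ∀ t i j, M t i j ≤ B :=
    ⟨(Finset.univ.sup fun p : Fin k × Fin d × Fin d => M p.1 p.2.1 p.2.2) + 1,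
      Nat.le_add_left 1 _,
      fun t i j => Nat.le_succ_of_le
        (Finset.le_sup (f := fun p : Fin k × Fin d × Fin d => M p.1 p.2.1 p.2.2)
          (Finset.mem_univ (t, i, j)))⟩
  have hzero : ∀ l : List (Fin k), ∀ i j : Fin d, j < i → (l.map M).prod i j = 0 := by
    intro l
    induction l with
    | nil =>
      intro i j hij
      simp [Matrix.one_apply, (Fin.ne_of_lt hij).symm]
    | cons a t ih =>
      intro i j hij
      simp only [List.map_cons, List.prod_cons, Matrix.mul_apply]
      apply Finset.sum_eq_zero
      intro x _
      rcases lt_or_ge x i with h | h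
      · rw [hlow a i x h, zero_mul]
      · rw [ih x j (lt_of_lt_of_le hij h), mul_zero]
  have pow_aux : ∀ m n : ℕ, 1 ≤ n → n ^ m + m * n ^ (m - 1) ≤ (n + 1) ^ m := by
    intro m
    induction m with
    | zero => intro n _; simp
    | succ m ih =>
      intro n hn
      have h1 := ih n hn
      have h2 : m * n ^ (m - 1) * n = m * n ^ m := by
        cases m with
        | zero => simp
        | succ p =>
          simp only [Nat.succ_sub_one]
          rw [mul_assoc, ← pow_succ]
      calc n ^ (m + 1) + (m + 1) * n ^ (m + 1 - 1)
          = n ^ m * n + m * n ^ m + n ^ m := by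
            rw [Nat.add_sub_cancel]; ring
        _ ≤ n ^ m * n + m * n ^ (m - 1) * n + (n ^ m + m * n ^ (m - 1)) := by
            rw [h2]; nlinarith [Nat.zero_le (m * n ^ (m - 1))]
        _ = (n ^ m + m * n ^ (m - 1)) * (n + 1) := by ring
        _ ≤ (n + 1) ^ m * (n + 1) := Nat.mul_le_mul_right _ h1
        _ = (n + 1) ^ (m + 1) := (pow_succ _ _).symm
  have key : ∀ l : List (Fin k), l ≠ [] → ∀ i j : Fin d,
      (l.map M).prod i j ≤ B ^ (((j : ℕ) - i) + 1) * l.length ^ ((j : ℕ) - i) := by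
    intro l
    induction l with
    | nil => intro h; exact absurd rfl h
    | cons a t ih =>
      intro _ i j
      rcases eq_or_ne t [] with rfl | ht
      · simp only [List.map_cons, List.map_nil, List.prod_cons, List.prod_nil, mul_one,
          List.length_cons, List.length_nil, Nat.zero_add, one_pow, mul_one]
        exact le_trans (hB a i j) (Nat.le_self_pow (Nat.succ_ne_zero _) B)
      · have hn : 1 ≤ t.length := List.length_pos_iff.mpr ht
        set n := t.length with hnn
        set m := (j : ℕ) - i with hm
        set Q := (t.map M).prod with hQ
        have hQij := ih ht
        have step : ((a :: t).map M).prod i j =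
            M a i i * Q i j + ∑ x ∈ Finset.univ.erase i, M a i x * Q x j := by
          simp only [List.map_cons, List.prod_cons, Matrix.mul_apply, ← hQ]
          exact (Finset.add_sum_erase _ _ (Finset.mem_univ i)).symm
        have hsub : Finset.Ioc i j ⊆ Finset.univ.erase i := by
          intro x hx
          exact Finset.mem_erase.mpr ⟨(Finset.mem_Ioc.mp hx).1.ne', Finset.mem_univ x⟩
        have hout : ∀ x ∈ Finset.univ.erase i, x ∉ Finset.Ioc i j → M a i x * Q x j = 0 := by
          intro x hx hnx
          have hxi : x ≠ i := (Finset.mem_erase.mp hx).1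
          rcases lt_or_ge x i with h | h
          · rw [hlow a i x h, zero_mul]
          · have hix : i < x := lt_of_le_of_ne h (Ne.symm hxi)
            have hjx : j < x := by
              by_contra hc
              exact hnx (Finset.mem_Ioc.mpr ⟨hix, le_of_not_gt hc⟩)
            rw [hQ, hzero t x j hjx, mul_zero]
        have hsum : ∑ x ∈ Finset.univ.erase i, M a i x * Q x j =
            ∑ x ∈ Finset.Ioc i j, M a i x * Q x j :=
          (Finset.sum_subset hsub hout).symm
        have hterm : ∀ x ∈ Finset.Ioc i j, M a i x * Q x j ≤ B ^ (m + 1) * n ^ (m - 1) := by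
          intro x hx
          obtain ⟨hix, hxj⟩ := Finset.mem_Ioc.mp hx
          have hix' : (i : ℕ) < x := hix
          have hxj' : (x : ℕ) ≤ j := hxj
          have h1 : (j : ℕ) - x + 1 ≤ m := by omega
          have h2 : (j : ℕ) - x ≤ m - 1 := by omega
          calc M a i x * Q x j ≤ B * (B ^ (((j : ℕ) - x) + 1) * n ^ ((j : ℕ) - x)) :=
                Nat.mul_le_mul (hB a i x) (ih ht x j)
            _ = B ^ (((j : ℕ) - x) + 2) * n ^ ((j : ℕ) - x) := by ring
            _ ≤ B ^ (m + 1) * n ^ (m - 1) :=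
                Nat.mul_le_mul (Nat.pow_le_pow_right hB1 (by omega))
                  (Nat.pow_le_pow_right hn h2)
        have hcard : (Finset.Ioc i j).card = m := by
          rw [Fin.card_Ioc]
        have hsum2 : ∑ x ∈ Finset.Ioc i j, M a i x * Q x j ≤ m * (B ^ (m + 1) * n ^ (m - 1)) := by
          calc ∑ x ∈ Finset.Ioc i j, M a i x * Q x j
              ≤ (Finset.Ioc i j).card * (B ^ (m + 1) * n ^ (m - 1)) :=
                Finset.sum_le_card_nsmul _ _ _ hterm
            _ = m * (B ^ (m + 1) * n ^ (m - 1)) := by rw [hcard]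
        have hdiagterm : M a i i * Q i j ≤ B ^ (m + 1) * n ^ m := by
          calc M a i i * Q i j ≤ 1 * (B ^ (m + 1) * n ^ m) :=
              Nat.mul_le_mul (hdiag a i) (ih ht i j)
            _ = B ^ (m + 1) * n ^ m := one_mul _
        have hlen : ((a :: t) : List (Fin k)).length = n + 1 := by simp [hnn]
        rw [step, hsum, hlen]
        calc M a i i * Q i j + ∑ x ∈ Finset.Ioc i j, M a i x * Q x j
            ≤ B ^ (m + 1) * n ^ m + m * (B ^ (m + 1) * n ^ (m - 1)) :=
              Nat.add_le_add hdiagterm hsum2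
          _ = B ^ (m + 1) * (n ^ m + m * n ^ (m - 1)) := by ring
          _ ≤ B ^ (m + 1) * (n + 1) ^ m := Nat.mul_le_mul_left _ (pow_aux m n hn)
  refine ⟨B ^ d, ?_⟩
  intro n hn l hl i j
  rcases lt_or_ge j i with hij | hij
  · rw [hzero l i j hij]
    exact Nat.zero_le _
  · have hne : l ≠ [] := by
      intro h; rw [h] at hl; simp at hl; omega
    have h := key l hne i j
    rw [hl] at h
    have hm1 : (j : ℕ) - i + 1 ≤ d := by
      have := j.isLt
      omega
    have hm2 : (j : ℕ) - i ≤ d - 1 := by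
      have := j.isLt
      omega
    calc (l.map M).prod i j ≤ B ^ (((j : ℕ) - i) + 1) * n ^ ((j : ℕ) - i) := h
      _ ≤ B ^ d * n ^ (d - 1) :=
          Nat.mul_le_mul (Nat.pow_le_pow_right hB1 hm1) (Nat.pow_le_pow_right hn hm2)
end

section
/- Let M₁,…,M_k be d×d matrices over ℕ whose diagonal entries satisfy M(i,i) < 1 for all i ≥ 2 (i.e., zero except possibly the (1,1) entry which is ≤ 1) and which are upper triangular. Then the set of all finite products of these matrices is bounded: there exists a matrix A over ℕ such that every product M_{i₁}·⋯·M_{i_p} (p ∈ ℕ) is pointwise ≤ A (constant growth). -/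
theorem stmt14 (d k : ℕ) (M : Fin k → Matrix (Fin d) (Fin d) ℕ)
    (hdiag : ∀ t i, M t i i ≤ 1)
    (hdiag2 : ∀ t (i : Fin d), 1 ≤ (i : ℕ) → M t i i = 0)
    (hlow : ∀ t (i j : Fin d), j < i → M t i j = 0) :
    ∃ A : Matrix (Fin d) (Fin d) ℕ,
      ∀ l : List (Fin k), ∀ i j, (l.map M).prod i j ≤ A i j := by
  set N : ℕ := (Finset.univ.sup fun t : Fin k => Finset.univ.sup fun i : Fin d =>
      Finset.univ.sup fun j : Fin d => M t i j) + 1 with hNdef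
  have hN1 : 1 ≤ N := Nat.le_add_left 1 _
  have hMN : ∀ t i j, M t i j ≤ N := by
    intro t i j
    have h : M t i j ≤ Finset.univ.sup fun t : Fin k => Finset.univ.sup fun i : Fin d =>
        Finset.univ.sup fun j : Fin d => M t i j := by
      refine le_trans ?_ (Finset.le_sup (Finset.mem_univ t))
      refine le_trans ?_ (Finset.le_sup (Finset.mem_univ i))
      exact Finset.le_sup (Finset.mem_univ j)
    omega
  have key : ∀ j : ℕ, N * ∑ m ∈ Finset.range j, (2*N)^m ≤ (2*N)^j := by
    intro j
    induction j with
    | zero => simp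
    | succ j ih =>
      rw [Finset.sum_range_succ, Nat.mul_add, pow_succ]
      have hp : 1 ≤ (2*N)^j := Nat.one_le_pow _ _ (by omega)
      nlinarith
  refine ⟨fun _ j => (2*N)^(j:ℕ), fun l => ?_⟩
  induction l using List.reverseRecOn with
  | nil =>
    intro i j
    rw [List.map_nil, List.prod_nil, Matrix.one_apply]
    split
    · exact Nat.one_le_pow _ _ (by omega)
    · exact Nat.zero_le _
  | append_singleton l t ih =>
    intro i j
    rw [List.map_append, List.prod_append, List.map_singleton, List.prod_singleton,
      Matrix.mul_apply]
    set P : Matrix (Fin d) (Fin d) ℕ := (l.map M).prod with hP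
    by_cases hj : (j : ℕ) = 0
    · -- only m = j contributes
      have hsum : ∑ m : Fin d, P i m * M t m j = P i j * M t j j := by
        refine Finset.sum_eq_single j ?_ (by simp)
        intro m _ hm
        have hjm : j < m := by
          rcases lt_or_gt_of_ne hm with h | h
          · exfalso; have := Fin.lt_iff_val_lt_val.mp h; omega
          · exact h
        rw [hlow t m j hjm, mul_zero]
      rw [hsum]
      show P i j * M t j j ≤ (2*N)^(j:ℕ)
      rw [hj, pow_zero]
      have h1 : P i j ≤ 1 := by
        have := ih i j; simpa [hj] using this
      have h2 := hdiag t j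
      exact le_trans (Nat.mul_le_mul h1 h2) (by norm_num)
    · -- j ≥ 1
      have hjj : M t j j = 0 := hdiag2 t j (by omega)
      have hbound : ∀ m : Fin d, P i m * M t m j ≤
          if (m : ℕ) < (j : ℕ) then (2*N)^(m:ℕ) * N else 0 := by
        intro m
        by_cases hm : (m : ℕ) < (j : ℕ)
        · simp only [hm, if_true]
          exact Nat.mul_le_mul (ih i m) (hMN t m j)
        · simp only [hm, if_false]
          rcases eq_or_lt_of_le (not_lt.mp hm) with h | h
          · have : m = j := Fin.ext h.symm
            rw [this, hjj, mul_zero]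
          · rw [hlow t m j (Fin.lt_iff_val_lt_val.mpr h), mul_zero]
      show ∑ m : Fin d, P i m * M t m j ≤ (2*N)^(j:ℕ)
      calc ∑ m : Fin d, P i m * M t m j
          ≤ ∑ m : Fin d, if (m : ℕ) < (j : ℕ) then (2*N)^(m:ℕ) * N else 0 :=
            Finset.sum_le_sum fun m _ => hbound m
        _ = ∑ m ∈ Finset.range d, if m < (j : ℕ) then (2*N)^m * N else 0 := by
            rw [Fin.sum_univ_eq_sum_range (fun m => if m < (j:ℕ) then (2*N)^m * N else 0) d]
        _ = ∑ m ∈ Finset.range (j : ℕ), (2*N)^m * N := by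
            rw [← Finset.sum_filter]
            apply Finset.sum_congr _ (fun _ _ => rfl)
            ext m
            simp only [Finset.mem_filter, Finset.mem_range]
            have := j.isLt
            omega
        _ = N * ∑ m ∈ Finset.range (j : ℕ), (2*N)^m := by
            rw [Finset.mul_sum]
            exact Finset.sum_congr rfl fun m _ => mul_comm _ _
        _ ≤ (2*N)^(j:ℕ) := key _
end
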